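/- arXiv:1803.03339 — 3 statements merged into one kernel-verified Lean document; each statement's English description precedes it below -/
import Mathlib

section
/- Let p be an odd prime, r ≥ 2, and 0 ≤ l < p^r. Then the image of the set D_l^{(p^{r+1})} = {u mod p^{r+1} : gcd(u,p)=1, Q_r(u)=l} under reduction modulo p^r equals D_{l mod p^{r−1}}^{(p^r)} = {v mod p^r : gcd(v,p)=1, Q_{r−1}(v) = l mod p^{r−1}}. -/
/-- The Euler quotient modulo `p^s` of `u`, as a representative in `{0,...,p^s-1}`. -/
def eulerQuotient (p s u : ℕ) : ℕ :=
  ((u ^ (p ^ (s - 1) * (p - 1)) - 1) / p ^ s) % p ^ s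

/-- The level set `D_l^{(p^{s+1})} = {u : 0 ≤ u < p^{s+1}, gcd(u,p)=1, Q_s(u)=l}`. -/
def levelSet (p s l : ℕ) : Finset ℕ :=
  (Finset.range (p ^ (s + 1))).filter (fun u => Nat.Coprime u p ∧ eulerQuotient p s u = l)

namespace EQAux

lemma cancel_pow {p : ℕ} (hp : p ≠ 0) {a b : ℕ} {x : ℤ} (h : (p:ℤ)^(a+b) ∣ (p:ℤ)^a * x) :
    (p:ℤ)^b ∣ x := by
  rcases h with ⟨k, hk⟩
  rw [pow_add, mul_assoc] at hk
  exact ⟨k, mul_left_cancel₀ (pow_ne_zero a (by exact_mod_cast hp)) hk⟩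

lemma rep {p : ℕ} (hp : p.Prime) {s u : ℕ} (hs : 1 ≤ s) (hu : Nat.Coprime u p) :
    ∃ A : ℤ, (u:ℤ)^(p^(s-1)*(p-1)) = 1 + (p:ℤ)^s * A ∧
      (eulerQuotient p s u : ℤ) = A % (p:ℤ)^s := by
  have hu1 : 1 ≤ u := by
    rcases Nat.eq_zero_or_pos u with rfl | h
    · exact absurd (Nat.coprime_zero_left p |>.mp hu) hp.one_lt.ne'
    · exact h
  set E := p^(s-1)*(p-1) with hE
  have h1 : 1 ≤ u ^ E := Nat.one_le_pow _ _ hu1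
  have heuler : u ^ E ≡ 1 [MOD p^s] := by
    have := Nat.ModEq.pow_totient (Nat.Coprime.pow_right s hu)
    rwa [Nat.totient_prime_pow hp hs] at this
  have hdvd : p^s ∣ u^E - 1 := (Nat.modEq_iff_dvd' h1).mp heuler.symm
  obtain ⟨k, hk⟩ := hdvd
  refine ⟨(k:ℤ), ?_, ?_⟩
  · have h' : (u:ℤ)^E - 1 = (p:ℤ)^s * k := by
      have := congrArg (fun n : ℕ => (n:ℤ)) hk
      push_cast [Nat.cast_sub h1] at this ⊢
      linarith
    linarith
  · have : eulerQuotient p s u = k % p^s := by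
      unfold eulerQuotient
      rw [← hE, hk, Nat.mul_div_cancel_left _ (pow_pos hp.pos s)]
    rw [this]; push_cast; ring

lemma KP {p : ℕ} (hp : p.Prime) (hodd : Odd p) {s : ℕ} (hs : 1 ≤ s) (A : ℤ) :
    (p:ℤ)^(2*s+1) ∣ (1 + (p:ℤ)^s*A)^p - (1 + (p:ℤ)^(s+1)*A) := by
  obtain ⟨q, hq⟩ : ∃ q, p = q + 3 := by
    obtain ⟨k, hk⟩ := hodd
    have := hp.two_le
    exact ⟨p - 3, by omega⟩
  set x : ℤ := (p:ℤ)^s*A with hx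
  have hexp : (1 + x)^p = ∑ k ∈ Finset.range (p+1), x^k * (p.choose k : ℤ) := by
    rw [add_comm, add_pow]
    simp
  have hsplit : (1 + x)^p = (∑ k ∈ Finset.range (q+2), x^(k+2) * (p.choose (k+2) : ℤ))
      + x * p + 1 := by
    rw [hexp, hq]
    rw [show q + 3 + 1 = (q+3)+1 from rfl, Finset.sum_range_succ' _ (q+3),
      Finset.sum_range_succ' _ (q+2)]
    simp [Nat.choose_one_right]
  have hxp : x * p = (p:ℤ)^(s+1) * A := by rw [hx]; ring
  rw [hsplit, hxp]
  have heq : (∑ k ∈ Finset.range (q+2), x^(k+2) * (p.choose (k+2) : ℤ)) + (p:ℤ)^(s+1)*A + 1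
      - (1 + (p:ℤ)^(s+1)*A) = ∑ k ∈ Finset.range (q+2), x^(k+2) * (p.choose (k+2) : ℤ) := by ring
  rw [heq]
  apply Finset.dvd_sum
  intro k hk
  rw [Finset.mem_range] at hk
  have hxk : x^(k+2) = (p:ℤ)^(s*(k+2)) * A^(k+2) := by rw [hx, mul_pow, ← pow_mul]
  rcases lt_or_ge k (q+1) with hlt | hge
  · have hch : (p:ℤ) ∣ (p.choose (k+2) : ℤ) :=
      Int.natCast_dvd_natCast.mpr (hp.dvd_choose_self (by omega) (by omega))
    have h1 : (p:ℤ)^(2*s) ∣ (p:ℤ)^(s*(k+2)) * A^(k+2) :=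
      dvd_mul_of_dvd_left (pow_dvd_pow _ (by nlinarith)) _
    rw [hxk, pow_succ]
    exact mul_dvd_mul h1 hch
  · have h1 : (p:ℤ)^(2*s+1) ∣ (p:ℤ)^(s*(k+2)) * A^(k+2) :=
      dvd_mul_of_dvd_left (pow_dvd_pow _ (by nlinarith)) _
    rw [hxk]
    exact dvd_mul_of_dvd_left h1 _

lemma emod_modEq_pow {p : ℕ} {a b : ℕ} (hab : a ≤ b) (B : ℤ) :
    B % (p:ℤ)^b ≡ B [ZMOD (p:ℤ)^a] := by
  show _ % _ = _ % _
  rw [Int.emod_emod_of_dvd _ (pow_dvd_pow _ hab)]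

/-- `Q_{s+1}(u) ≡ Q_s(u) mod p^s` -/
lemma step {p : ℕ} (hp : p.Prime) (hodd : Odd p) {s u : ℕ} (hs : 1 ≤ s)
    (hu : Nat.Coprime u p) :
    (eulerQuotient p (s+1) u : ℤ) ≡ (eulerQuotient p s u : ℤ) [ZMOD (p:ℤ)^s] := by
  obtain ⟨A, hA, hQA⟩ := rep hp hs hu
  obtain ⟨B, hB, hQB⟩ := rep hp (by omega : 1 ≤ s + 1) hu (s := s+1)
  have hpow : (u:ℤ)^(p^((s+1)-1)*(p-1)) = ((u:ℤ)^(p^(s-1)*(p-1)))^p := by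
    rw [← pow_mul]
    congr 1
    rw [Nat.add_sub_cancel]
    conv_lhs => rw [← Nat.sub_add_cancel hs, pow_succ]
    ring
  have hKP := KP hp hodd hs A
  rw [← hA, ← hpow, hB] at hKP
  have h3 : (1 + (p:ℤ)^(s+1)*B) - (1 + (p:ℤ)^(s+1)*A) = (p:ℤ)^(s+1) * (B - A) := by ring
  rw [h3] at hKP
  have hBA : (p:ℤ)^s ∣ B - A := cancel_pow hp.ne_zero (by
    have : 2*s+1 = (s+1) + s := by omega
    rwa [← this])
  rw [hQA, hQB]
  calc B % (p:ℤ)^(s+1) ≡ B [ZMOD (p:ℤ)^s] := emod_modEq_pow (by omega) B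
    _ ≡ A [ZMOD (p:ℤ)^s] := (Int.modEq_iff_dvd.mpr hBA).symm
    _ ≡ A % (p:ℤ)^s [ZMOD (p:ℤ)^s] := (emod_modEq_pow le_rfl A).symm

lemma coprime_lift {p : ℕ} {v t m : ℕ} (hm : 1 ≤ m) (hv : Nat.Coprime v p) :
    Nat.Coprime (v + t * p^m) p := by
  have h : v + t * p^m = v + p * (t * p^(m-1)) := by
    conv_lhs => rw [← Nat.sub_add_cancel hm, pow_succ]
    ring
  rw [h]
  exact (Nat.coprime_add_mul_left_left v p _).mpr hv

/-- congruent lifts mod `p^(s+1)` have congruent `Q_s` mod `p^s` -/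
lemma shift {p : ℕ} (hp : p.Prime) {s v t : ℕ} (hs : 1 ≤ s) (hv : Nat.Coprime v p) :
    (eulerQuotient p s (v + t * p^(s+1)) : ℤ) ≡ (eulerQuotient p s v : ℤ) [ZMOD (p:ℤ)^s] := by
  set E := p^(s-1)*(p-1) with hE
  obtain ⟨A, hA, hQA⟩ := rep hp hs hv
  obtain ⟨B, hB, hQB⟩ := rep hp hs (coprime_lift (by omega) hv (t := t) (m := s+1))
  set c : ℤ := (t:ℤ) * (p:ℤ)^(s+1) with hc
  have hcast : ((v + t * p^(s+1) : ℕ) : ℤ) = (v:ℤ) + c := by push_cast; ring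
  have hKB := sq_dvd_add_pow_sub_sub c (v:ℤ) E
  have hdvd1 : (p:ℤ)^(2*s) ∣ c^2 := by
    refine Dvd.dvd.trans (pow_dvd_pow (p:ℤ) (by omega : 2*s ≤ 2*(s+1))) ?_
    exact ⟨(t:ℤ)^2, by rw [hc]; ring⟩
  have hdvd2 : (p:ℤ)^(2*s) ∣ (v:ℤ)^(E-1)*c*(E:ℤ) := by
    have hEd : ((p:ℤ))^(s-1) ∣ (E:ℤ) := ⟨((p:ℕ) - 1 : ℕ), by rw [hE]; push_cast; ring⟩
    have hcd : ((p:ℤ))^(s+1) ∣ c := ⟨(t:ℤ), by rw [hc]; ring⟩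
    have h1 : (p:ℤ)^(s+1) * (p:ℤ)^(s-1) ∣ c * (E:ℤ) := mul_dvd_mul hcd hEd
    rw [← pow_add] at h1
    have h2s : s + 1 + (s-1) = 2*s := by omega
    rw [h2s] at h1
    have h3 : (v:ℤ)^(E-1)*c*(E:ℤ) = (v:ℤ)^(E-1) * (c * (E:ℤ)) := by ring
    rw [h3]
    exact dvd_mul_of_dvd_right h1 _
  have hmain : (p:ℤ)^(2*s) ∣ ((v:ℤ)+c)^E - (v:ℤ)^E := by
    have h4 := (hdvd1.trans hKB).add hdvd2
    have heq : ((v:ℤ)+c)^E - (v:ℤ)^(E-1)*c*(E:ℤ) - (v:ℤ)^E + (v:ℤ)^(E-1)*c*(E:ℤ)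
        = ((v:ℤ)+c)^E - (v:ℤ)^E := by ring
    rwa [heq] at h4
  rw [← hcast, hA, hB] at hmain
  have heq2 : (1 + (p:ℤ)^s*B) - (1 + (p:ℤ)^s*A) = (p:ℤ)^s * (B - A) := by ring
  rw [heq2] at hmain
  have hBA : (p:ℤ)^s ∣ B - A := cancel_pow hp.ne_zero (by
    have : 2*s = s + s := by omega
    rwa [← this])
  rw [hQA, hQB]
  calc B % (p:ℤ)^s ≡ B [ZMOD (p:ℤ)^s] := emod_modEq_pow le_rfl B
    _ ≡ A [ZMOD (p:ℤ)^s] := (Int.modEq_iff_dvd.mpr hBA).symm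
    _ ≡ A % (p:ℤ)^s [ZMOD (p:ℤ)^s] := (emod_modEq_pow le_rfl A).symm

/-- `Q_{s+1}(v + t p^{s+1}) ≡ Q_{s+1}(v) + t (p-1) v^{E-1} p^s  mod p^{s+1}` -/
lemma shift_precise {p : ℕ} (hp : p.Prime) {s v t : ℕ} (hs : 1 ≤ s) (hv : Nat.Coprime v p) :
    (eulerQuotient p (s+1) (v + t * p^(s+1)) : ℤ) ≡
      (eulerQuotient p (s+1) v : ℤ)
        + (t:ℤ) * (((p:ℤ)-1) * (v:ℤ)^(p^s*(p-1)-1)) * (p:ℤ)^s [ZMOD (p:ℤ)^(s+1)] := by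
  have hs1 : 1 ≤ s + 1 := by omega
  set E := p^((s+1)-1)*(p-1) with hE
  have hE' : E = p^s*(p-1) := by rw [hE, Nat.add_sub_cancel]
  obtain ⟨A, hA, hQA⟩ := rep hp hs1 hv
  obtain ⟨B, hB, hQB⟩ := rep hp hs1 (coprime_lift (by omega : 1 ≤ s+1) hv (t := t))
  set c : ℤ := (t:ℤ) * (p:ℤ)^(s+1) with hc
  have hcast : ((v + t * p^(s+1) : ℕ) : ℤ) = (v:ℤ) + c := by push_cast; ring
  have hKB := sq_dvd_add_pow_sub_sub c (v:ℤ) E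
  have hdvd1 : (p:ℤ)^(2*s+2) ∣ c^2 := ⟨(t:ℤ)^2, by rw [hc]; ring⟩
  have hmain : (p:ℤ)^(2*s+2) ∣ ((v:ℤ)+c)^E - (v:ℤ)^(E-1)*c*(E:ℤ) - (v:ℤ)^E :=
    hdvd1.trans hKB
  have hcE : (v:ℤ)^(E-1)*c*(E:ℤ)
      = (p:ℤ)^(s+1) * ((t:ℤ) * (((p:ℤ)-1) * (v:ℤ)^(E-1)) * (p:ℤ)^s) := by
    have hEcast : (E:ℤ) = (p:ℤ)^s * ((p:ℤ)-1) := by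
      rw [hE']
      push_cast [Nat.cast_sub hp.one_le]
      ring
    rw [hEcast, hc]
    ring
  rw [← hcast, hA, hB, hcE] at hmain
  set X : ℤ := (t:ℤ) * (((p:ℤ)-1) * (v:ℤ)^(E-1)) * (p:ℤ)^s with hX
  have heq : (1 + (p:ℤ)^(s+1)*B) - (p:ℤ)^(s+1) * X - (1 + (p:ℤ)^(s+1)*A)
      = (p:ℤ)^(s+1) * (B - A - X) := by ring
  rw [heq] at hmain
  have hBA : (p:ℤ)^(s+1) ∣ B - A - X := cancel_pow hp.ne_zero (by
    have : 2*s+2 = (s+1) + (s+1) := by omega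
    rwa [← this])
  rw [hQA, hQB, ← hE']
  calc B % (p:ℤ)^(s+1) ≡ B [ZMOD (p:ℤ)^(s+1)] := emod_modEq_pow le_rfl B
    _ ≡ A + X [ZMOD (p:ℤ)^(s+1)] := by
        refine (Int.modEq_iff_dvd.mpr ?_).symm
        have h5 : B - (A + X) = B - A - X := by ring
        rwa [h5]
    _ ≡ A % (p:ℤ)^(s+1) + X [ZMOD (p:ℤ)^(s+1)] :=
        Int.ModEq.add_right X (emod_modEq_pow le_rfl A).symm

lemma eq_lt {p s u : ℕ} (hp : 0 < p) : eulerQuotient p s u < p^s :=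
  Nat.mod_lt _ (pow_pos hp s)

lemma nat_eq_of_modEq {p s : ℕ} {a l : ℕ} (ha : a < p^s)
    (h : (a:ℤ) ≡ (l:ℤ) [ZMOD (p:ℤ)^s]) : a = l % p^s := by
  have h' : ((a % p^s : ℕ) : ℤ) = ((l % p^s : ℕ) : ℤ) := by
    push_cast
    exact h
  have h2 : a % p^s = l % p^s := Nat.cast_inj.mp h'
  rwa [Nat.mod_eq_of_lt ha] at h2

end EQAux

theorem levelSet_image_mod (p : ℕ) (hp : p.Prime) (hodd : Odd p)
    (r : ℕ) (hr : 2 ≤ r) (l : ℕ) (hl : l < p ^ r) :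
    (levelSet p r l).image (fun u => u % p ^ r) = levelSet p (r - 1) (l % p ^ (r - 1)) := by
  haveI : Fact p.Prime := ⟨hp⟩
  haveI : NeZero p := ⟨hp.ne_zero⟩
  have hpZ : Prime (p:ℤ) := Nat.prime_iff_prime_int.mp hp
  obtain ⟨m, rfl⟩ : ∃ m, r = (m + 1) + 1 := ⟨r - 2, by omega⟩
  set s := m + 1 with hsdef
  have hs : 1 ≤ s := by omega
  have hr1 : s + 1 - 1 = s := by omega
  rw [hr1]
  ext x
  simp only [levelSet, Finset.mem_image, Finset.mem_filter, Finset.mem_range]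
  constructor
  · rintro ⟨u, ⟨⟨hu_lt, hu_cop, hu_Q⟩, rfl⟩⟩
    have hv_lt : u % p^(s+1) < p^(s+1) := Nat.mod_lt _ (pow_pos hp.pos _)
    have hu_eq : u = u % p^(s+1) + (u / p^(s+1)) * p^(s+1) := by
      rw [Nat.mod_add_div']
    have hv_cop : Nat.Coprime (u % p^(s+1)) p := by
      by_contra hcon
      apply absurd hu_cop
      rw [hu_eq]
      intro hc
      exact hcon (((Nat.coprime_add_mul_left_left _ p _).mp (by
        have h : u % p^(s+1) + (u / p^(s+1)) * p^(s+1)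
            = u % p^(s+1) + p * ((u / p^(s+1)) * p^s) := by ring
        rw [← h]
        exact hc)))
    refine ⟨hv_lt, hv_cop, ?_⟩
    have h1 : (eulerQuotient p s u : ℤ) ≡ (eulerQuotient p s (u % p^(s+1)) : ℤ)
        [ZMOD (p:ℤ)^s] := by
      conv_lhs => rw [hu_eq]
      exact EQAux.shift hp hs hv_cop
    have h2 := EQAux.step hp hodd hs hu_cop (u := u)
    rw [hu_Q] at h2
    exact EQAux.nat_eq_of_modEq (EQAux.eq_lt hp.pos) (h1.symm.trans h2.symm)
  · rintro ⟨hv_lt, hv_cop, hv_Q⟩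
    -- setup
    set c : ℤ := ((p:ℤ)-1) * (x:ℤ)^(p^s*(p-1)-1) with hc
    have hQl : (eulerQuotient p (s+1) x : ℤ) ≡ (l:ℤ) [ZMOD (p:ℤ)^s] := by
      have h2 := EQAux.step hp hodd hs hv_cop (u := x)
      rw [hv_Q] at h2
      refine h2.trans ?_
      have : ((l % p^s : ℕ) : ℤ) = (l:ℤ) % (p:ℤ)^s := by push_cast; ring
      rw [this]
      exact EQAux.emod_modEq_pow le_rfl (l:ℤ)
    obtain ⟨d, hd⟩ : (p:ℤ)^s ∣ (l:ℤ) - (eulerQuotient p (s+1) x : ℤ) :=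
      Int.modEq_iff_dvd.mp hQl
    have hc_nd : ¬ (p:ℤ) ∣ c := by
      rw [hc]
      intro h
      rcases hpZ.dvd_mul.mp h with h1 | h1
      · have h2 : (p:ℤ) ∣ 1 := by
          have h3 := dvd_sub (dvd_refl (p:ℤ)) h1
          rwa [show (p:ℤ) - ((p:ℤ)-1) = 1 by ring] at h3
        have := Int.le_of_dvd one_pos h2
        have := hp.two_le
        omega
      · have h2 : (p:ℤ) ∣ (x:ℤ) := hpZ.dvd_of_dvd_pow h1
        rw [Int.natCast_dvd_natCast] at h2
        exact (hp.coprime_iff_not_dvd.mp hv_cop.symm) h2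
    have hc0 : ((c : ZMod p)) ≠ 0 := by
      rw [Ne, ZMod.intCast_zmod_eq_zero_iff_dvd]
      exact hc_nd
    set t : ℕ := ((d : ZMod p) * (c : ZMod p)⁻¹).val with htdef
    have ht_lt : t < p := ZMod.val_lt _
    have htc : (p:ℤ) ∣ (t:ℤ) * c - d := by
      have h0 : (((t:ℤ) * c - d : ℤ) : ZMod p) = 0 := by
        push_cast
        rw [htdef]
        rw [ZMod.natCast_val, ZMod.cast_id]
        have hinv : (c : ZMod p)⁻¹ * (c : ZMod p) = 1 := inv_mul_cancel₀ hc0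
        linear_combination (d : ZMod p) * hinv
      exact (ZMod.intCast_zmod_eq_zero_iff_dvd _ p).mp h0
    refine ⟨x + t * p^(s+1), ⟨⟨?_, EQAux.coprime_lift (by omega) hv_cop, ?_⟩, ?_⟩⟩
    · calc x + t * p^(s+1) < p^(s+1) + t * p^(s+1) := by omega
        _ ≤ p^(s+1) + (p-1) * p^(s+1) := by
            have : t ≤ p - 1 := by omega
            exact Nat.add_le_add_left (Nat.mul_le_mul_right _ this) _
        _ = (1 + (p-1)) * p^(s+1) := by ring
        _ = p * p^(s+1) := by
            have hp1 : 1 + (p - 1) = p := by have := hp.one_le; omega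
            rw [hp1]
        _ = p^(s+1+1) := by rw [pow_succ]; ring
    · -- Q_{s+1}(x + t p^{s+1}) = l
      have h1 := EQAux.shift_precise hp hs hv_cop (t := t)
      have h2 : (eulerQuotient p (s+1) x : ℤ) + (t:ℤ) * c * (p:ℤ)^s ≡ (l:ℤ)
          [ZMOD (p:ℤ)^(s+1)] := by
        refine Int.modEq_iff_dvd.mpr ?_
        have heq : (l:ℤ) - ((eulerQuotient p (s+1) x : ℤ) + (t:ℤ) * c * (p:ℤ)^s)
            = (p:ℤ)^s * (d - (t:ℤ)*c) := by linear_combination hd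
        rw [heq, pow_succ]
        refine mul_dvd_mul dvd_rfl ?_
        have : d - (t:ℤ)*c = -((t:ℤ)*c - d) := by ring
        rw [this]
        exact dvd_neg.mpr htc
      have h3 := h1.trans h2
      refine EQAux.nat_eq_of_modEq (EQAux.eq_lt hp.pos) h3 |>.trans ?_
      exact Nat.mod_eq_of_lt hl
    · -- reduction
      rw [Nat.add_mul_mod_self_right]
      exact Nat.mod_eq_of_lt hv_lt
end

section
/- Let p be an odd prime, r ≥ 2, and 0 ≤ l < p^{r−1}. Then the reduction modulo p of the set D_l^{(p^r)} = {u mod p^r : gcd(u,p)=1, Q_{r−1}(u)=l} equals the full set {1,2,...,p−1} of nonzero residues modulo p. -/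
section Aux

variable {p : ℕ}

private lemma eq_step_pow (hp : p.Prime) {a b : ℤ} {m : ℕ} (hm : 1 ≤ m)
    (h : (p:ℤ)^m ∣ a - b) : (p:ℤ)^(m+1) ∣ a^p - b^p := by
  have hab : (p:ℤ) ∣ a - b := by
    refine dvd_trans ?_ h
    simpa using pow_dvd_pow (p:ℤ) hm
  have hS : (p:ℤ) ∣ ∑ i ∈ Finset.range p, a ^ i * b ^ (p - 1 - i) := by
    rw [← ZMod.intCast_zmod_eq_zero_iff_dvd]
    have hb : ((a : ZMod p)) = (b : ZMod p) := by
      have := (ZMod.intCast_zmod_eq_zero_iff_dvd (a - b) p).mpr hab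
      push_cast at this
      exact sub_eq_zero.mp this
    push_cast
    have hc : ∀ i ∈ Finset.range p, (a:ZMod p) ^ i * (b:ZMod p) ^ (p-1-i) = (b:ZMod p)^(p-1) := by
      intro i hi
      rw [hb, ← pow_add]
      congr 1
      have := Finset.mem_range.mp hi
      have := hp.one_lt
      omega
    rw [Finset.sum_congr rfl hc, Finset.sum_const, Finset.card_range]
    simp
  rw [← geom_sum₂_mul a b p, pow_succ']
  exact mul_dvd_mul hS h

private lemma eq_pow_pow (hp : p.Prime) {a b : ℤ} {m : ℕ} (hm : 1 ≤ m)
    (h : (p:ℤ)^m ∣ a - b) (n : ℕ) : (p:ℤ)^(m+n) ∣ a^(p^n) - b^(p^n) := by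
  induction n with
  | zero => simpa using h
  | succ n ih =>
      have := eq_step_pow hp (m := m + n) (by omega) ih
      rw [show m + (n+1) = m + n + 1 from by omega, show p^(n+1) = p^n * p from pow_succ p n,
        pow_mul, pow_mul]
      exact this

private lemma one_add_pow_dvd (hp : p.Prime) (hodd : Odd p) {c : ℤ} (hc : (p:ℤ) ∣ c) :
    ∃ w : ℤ, (1 + c)^p = 1 + p*c + p*c^2*w := by
  have h3 : 3 ≤ p := by
    have := hp.two_le
    rcases Nat.lt_or_ge p 3 with h | h
    · interval_cases p
      · exact absurd hodd (by decide)
    · exact h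
  have hdvd : (p:ℤ)*c^2 ∣ ∑ i ∈ Finset.range (p-1), (c^(i+2) * (p.choose (i+2) : ℤ)) := by
    refine Finset.dvd_sum (fun i hi => ?_)
    have hi' := Finset.mem_range.mp hi
    rcases Nat.lt_or_ge (i+2) p with hlt | hge
    · obtain ⟨d, hd⟩ := hp.dvd_choose_self (k := i+2) (by omega) hlt
      refine ⟨c^i * d, ?_⟩
      rw [hd]
      push_cast
      ring
    · -- i + 2 = p
      have hip : i + 2 = p := by omega
      obtain ⟨e, he⟩ := hc
      refine ⟨e * c^(i-1), ?_⟩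
      have h2 : c ^ (i + 2) = c * c^2 * c^(i-1) := by
        rw [show i+2 = 1+2+(i-1) from by omega, pow_add, pow_add]
        ring
      have h4 : p.choose (i+2) = 1 := by rw [hip]; exact Nat.choose_self p
      rw [h2, h4, he]
      push_cast
      ring
  obtain ⟨w, hw⟩ := hdvd
  refine ⟨w, ?_⟩
  have hap := add_pow c 1 p
  simp only [one_pow, mul_one] at hap
  have hsplit : ∑ k ∈ Finset.range (p+1), c ^ k * (p.choose k : ℤ)
      = (∑ i ∈ Finset.range (p-1), (c^(i+2) * (p.choose (i+2) : ℤ)))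
        + c^1 * (p.choose 1 : ℤ) + c^0 * (p.choose 0 : ℤ) := by
    have h1 : p + 1 = (p - 1) + 1 + 1 := by omega
    rw [h1, Finset.sum_range_succ', Finset.sum_range_succ']
  rw [add_comm (1:ℤ) c, hap, hsplit, hw]
  push_cast [Nat.choose_one_right, Nat.choose_zero_right]
  ring

private lemma one_add_p_pow (hp : p.Prime) (hodd : Odd p) (j : ℕ) :
    ∃ t : ℤ, (1 + (p:ℤ))^(p^j) = 1 + (p:ℤ)^(j+1) * (1 + p * t) := by
  induction j with
  | zero => exact ⟨0, by ring⟩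
  | succ j ih =>
      obtain ⟨t, ht⟩ := ih
      have hc : (p:ℤ) ∣ (p:ℤ)^(j+1) * (1 + p * t) :=
        Dvd.dvd.mul_right (dvd_pow_self _ (by omega)) _
      obtain ⟨w, hw⟩ := one_add_pow_dvd hp hodd hc
      refine ⟨t + p^j * (1 + p*t)^2 * w, ?_⟩
      rw [show p^(j+1) = p^j * p from pow_succ p j, pow_mul, ht, hw]
      push_cast
      ring

private lemma one_add_pow_sq (X : ℤ) (m : ℕ) : ∃ e : ℤ, (1 + X)^m = 1 + m * X + X^2 * e := by
  induction m with
  | zero => exact ⟨0, by simp⟩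
  | succ m ih =>
      obtain ⟨e, he⟩ := ih
      refine ⟨e + m + e * X, ?_⟩
      rw [pow_succ, he]
      push_cast
      ring

private lemma coprime_pos {u : ℕ} (hp : p.Prime) (hu : u.Coprime p) : 0 < u := by
  rcases Nat.eq_zero_or_pos u with h | h
  · subst h
    rw [Nat.coprime_zero_left] at hu
    exact absurd hu hp.ne_one
  · exact h

private lemma euler_char (hp : p.Prime) {s : ℕ} (hs : 1 ≤ s) {u : ℕ} (hu : u.Coprime p) :
    ∃ m : ℤ, (u:ℤ) ^ (p^(s-1)*(p-1)) =
      1 + (p:ℤ)^s * (eulerQuotient p s u) + (p:ℤ)^(2*s) * m := by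
  have htot : (p^s).totient = p^(s-1)*(p-1) := Nat.totient_prime_pow hp hs
  have heuler : u ^ (p^(s-1)*(p-1)) ≡ 1 [MOD p^s] := htot ▸ Nat.ModEq.pow_totient (hu.pow_right s)
  have hupos := coprime_pos hp hu
  have h1 : 1 ≤ u ^ (p^(s-1)*(p-1)) := Nat.one_le_iff_ne_zero.mpr (pow_ne_zero _ (by omega))
  have hdvd : p^s ∣ u ^ (p^(s-1)*(p-1)) - 1 := (Nat.modEq_iff_dvd' h1).mp heuler.symm
  set N := u ^ (p^(s-1)*(p-1)) - 1 with hN_def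
  set Q := eulerQuotient p s u with hQ_def
  set M := N / p^s / p^s with hM_def
  refine ⟨(M : ℤ), ?_⟩
  have hN : p^s * (N / p^s) = N := Nat.mul_div_cancel' hdvd
  have e1 : p^s * M + (N / p^s) % p^s = N / p^s := Nat.div_add_mod _ _
  have hq : Q = (N / p^s) % p^s := rfl
  have hnat : u ^ (p^(s-1)*(p-1)) = 1 + p^s * Q + (p^s * p^s) * M := by
    have h2 : u ^ (p^(s-1)*(p-1)) = 1 + N := by omega
    have h3 : N = p^s * (p^s * M + (N / p^s) % p^s) := by rw [e1]; exact hN.symm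
    rw [h2, h3, hq]
    ring
  have hcast : ((u:ℤ)) ^ (p^(s-1)*(p-1)) = 1 + (p:ℤ)^s * Q + ((p:ℤ)^s * (p:ℤ)^s) * M := by
    exact_mod_cast hnat
  rw [hcast, show 2*s = s + s from by omega, pow_add]

private lemma euler_eq (hp : p.Prime) {s : ℕ} (hs : 1 ≤ s) {u x : ℕ} (hu : u.Coprime p)
    (hx : x < p^s) {m : ℤ}
    (h : (u:ℤ) ^ (p^(s-1)*(p-1)) = 1 + (p:ℤ)^s * x + (p:ℤ)^(2*s) * m) :
    eulerQuotient p s u = x := by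
  obtain ⟨m', hm'⟩ := euler_char hp hs hu
  have hQ : eulerQuotient p s u < p^s := Nat.mod_lt _ (pow_pos hp.pos s)
  have hpsne : ((p:ℤ)^s) ≠ 0 := pow_ne_zero s (by exact_mod_cast hp.pos.ne')
  have h2s : ((p:ℤ))^(2*s) = (p:ℤ)^s * (p:ℤ)^s := by
    rw [show 2*s = s + s from by omega, pow_add]
  have key : (p:ℤ)^s * ((eulerQuotient p s u : ℤ) - x) = (p:ℤ)^s * ((p:ℤ)^s * (m - m')) := by
    rw [← mul_assoc, ← h2s]
    linear_combination h - hm'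
  have key2 := mul_left_cancel₀ hpsne key
  have := Int.eq_zero_of_abs_lt_dvd ⟨m - m', key2⟩ (by
    rw [abs_lt]
    constructor
    · have : (x:ℤ) < (p:ℤ)^s := by exact_mod_cast hx
      omega
    · have : ((eulerQuotient p s u : ℤ)) < (p:ℤ)^s := by exact_mod_cast hQ
      omega)
  omega

private lemma coprime_one_add (hp : p.Prime) : Nat.Coprime (1 + p) p :=
  Nat.coprime_add_self_left.mpr (Nat.coprime_one_left p)

private lemma euler_mod (hp : p.Prime) {s : ℕ} (hs : 1 ≤ s) {u : ℕ} (hu : u.Coprime p) :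
    eulerQuotient p s (u % p^(s+1)) = eulerQuotient p s u := by
  set v := u % p^(s+1) with hv_def
  have hvu : v ≡ u [MOD p^(s+1)] := Nat.mod_modEq u _
  have hvc : v.Coprime p := by
    have hdvd : p ∣ p^(s+1) := dvd_pow_self p (by omega)
    have : ¬ p ∣ v := by
      rw [Nat.dvd_mod_iff hdvd]
      exact hp.coprime_iff_not_dvd.mp hu.symm
    exact (hp.coprime_iff_not_dvd.mpr this).symm
  have hmod : ((p:ℤ))^(s+1) ∣ (u:ℤ) - (v:ℤ) := by
    have := (Nat.modEq_iff_dvd (n := p^(s+1))).mp hvu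
    push_cast at this ⊢
    exact this
  have h2 : (p:ℤ)^(2*s) ∣ (u:ℤ)^(p^(s-1)) - (v:ℤ)^(p^(s-1)) := by
    have := eq_pow_pow hp (m := s+1) (by omega) hmod (s-1)
    rwa [show s + 1 + (s - 1) = 2*s from by omega] at this
  have h3 : (p:ℤ)^(2*s) ∣ (u:ℤ)^(p^(s-1)*(p-1)) - (v:ℤ)^(p^(s-1)*(p-1)) := by
    have hme : ((v:ℤ)^(p^(s-1))) ≡ ((u:ℤ)^(p^(s-1))) [ZMOD ((p:ℤ)^(2*s))] :=
      Int.modEq_iff_dvd.mpr h2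
    have h4 := (hme.pow (p-1)).dvd
    rw [← pow_mul, ← pow_mul] at h4
    exact h4
  obtain ⟨m, hm⟩ := euler_char hp hs hu
  obtain ⟨d, hd⟩ := h3
  have hxlt : eulerQuotient p s u < p^s := Nat.mod_lt _ (pow_pos hp.pos s)
  apply euler_eq hp hs hvc hxlt (m := m - d)
  have : (v:ℤ)^(p^(s-1)*(p-1)) = (u:ℤ)^(p^(s-1)*(p-1)) - (p:ℤ)^(2*s) * d := by
    linear_combination -hd
  rw [this, hm]
  ring

private lemma euler_mul (hp : p.Prime) {s : ℕ} (hs : 1 ≤ s) {u v : ℕ}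
    (hu : u.Coprime p) (hv : v.Coprime p) :
    eulerQuotient p s (u * v) = (eulerQuotient p s u + eulerQuotient p s v) % p^s := by
  obtain ⟨m, hm⟩ := euler_char hp hs hu
  obtain ⟨n, hn⟩ := euler_char hp hs hv
  set A := eulerQuotient p s u
  set B := eulerQuotient p s v
  have hDR : p^s * ((A + B) / p^s) + (A + B) % p^s = A + B := Nat.div_add_mod _ _
  have hcast : ((p:ℤ))^s * (((A+B)/p^s : ℕ) : ℤ) + (((A+B) % p^s : ℕ) : ℤ) = (A:ℤ) + B := by
    exact_mod_cast hDR
  have hxlt : (A + B) % p^s < p^s := Nat.mod_lt _ (pow_pos hp.pos s)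
  apply euler_eq hp hs (hu.mul hv) hxlt
    (m := m + n + A*B + (p:ℤ)^s*((A:ℤ)*n + (B:ℤ)*m) + (p:ℤ)^(2*s)*(m*n) + (((A+B)/p^s : ℕ) : ℤ))
  rw [Nat.cast_mul, mul_pow, hm, hn]
  have h2s : ((p:ℤ))^(2*s) = (p:ℤ)^s * (p:ℤ)^s := by
    rw [show 2*s = s + s from by omega, pow_add]
  rw [h2s]
  linear_combination (-(p:ℤ)^s) * hcast

private lemma euler_one (hp : p.Prime) {s : ℕ} (hs : 1 ≤ s) : eulerQuotient p s 1 = 0 := by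
  apply euler_eq hp hs (Nat.coprime_one_left p) (pow_pos hp.pos s) (m := 0)
  simp

private lemma euler_pow (hp : p.Prime) {s : ℕ} (hs : 1 ≤ s) {u : ℕ} (hu : u.Coprime p)
    (k : ℕ) : eulerQuotient p s (u^k) = (k * eulerQuotient p s u) % p^s := by
  induction k with
  | zero => simpa using euler_one hp hs
  | succ k ih =>
      rw [pow_succ, euler_mul hp hs (hu.pow_left k) hu, ih, Nat.mod_add_mod, Nat.succ_mul]

private lemma q_not_dvd (hp : p.Prime) (hodd : Odd p) {s : ℕ} (hs : 1 ≤ s) :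
    ¬ p ∣ eulerQuotient p s (1 + p) := by
  obtain ⟨t, ht⟩ := one_add_p_pow hp hodd (s-1)
  rw [show s - 1 + 1 = s from by omega] at ht
  obtain ⟨e, he⟩ := one_add_pow_sq ((p:ℤ)^s * (1 + p*t)) (p-1)
  obtain ⟨m, hm⟩ := euler_char hp hs (coprime_one_add hp)
  set Q := eulerQuotient p s (1 + p) with hQ_def
  have h2s : ((p:ℤ))^(2*s) = (p:ℤ)^s * (p:ℤ)^s := by
    rw [show 2*s = s + s from by omega, pow_add]
  have hp1 : (((p - 1 : ℕ)) : ℤ) = (p:ℤ) - 1 := by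
    have := hp.one_le
    push_cast [Nat.cast_sub this]
    ring
  have hexp : (1+(p:ℤ))^(p^(s-1)*(p-1)) =
      1 + ((p:ℤ)-1)*((p:ℤ)^s*(1+p*t)) + ((p:ℤ)^s*(1+p*t))^2 * e := by
    rw [pow_mul, ht, he, hp1]
  have hm' : (1+(p:ℤ))^(p^(s-1)*(p-1)) = 1 + (p:ℤ)^s * Q + (p:ℤ)^(2*s) * m := by
    rw [← hm]
    push_cast
    ring
  have hpsne : ((p:ℤ)^s) ≠ 0 := pow_ne_zero s (by exact_mod_cast hp.pos.ne')
  have key : (p:ℤ)^s * ((Q:ℤ)) =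
      (p:ℤ)^s * (((p:ℤ)-1)*(1+p*t) + (p:ℤ)^s*((1+p*t)^2*e - m)) := by
    linear_combination hexp - hm' 
  have key2 := mul_left_cancel₀ hpsne key
  intro hdvd
  have hd1 : (p:ℤ) ∣ (Q:ℤ) := Int.natCast_dvd_natCast.mpr hdvd
  have hd2 : (p:ℤ) ∣ (p:ℤ)^s*((1+p*t)^2*e - m) := (dvd_pow_self (p:ℤ) (by omega)).mul_right _
  have hd3 : (p:ℤ) ∣ ((p:ℤ)-1)*(1+p*t) := by
    have : ((p:ℤ)-1)*(1+p*t) = (Q:ℤ) - (p:ℤ)^s*((1+p*t)^2*e - m) := by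
      linear_combination -key2
    rw [this]
    exact hd1.sub hd2
  have hd4 : (p:ℤ) ∣ 1 + p*t := by
    have : (1 + (p:ℤ)*t) = (p:ℤ)*(1+p*t) - ((p:ℤ)-1)*(1+p*t) := by ring
    rw [this]
    exact (Dvd.intro _ rfl).sub hd3
  have hd5 : (p:ℤ) ∣ 1 := by
    have : (1:ℤ) = (1 + (p:ℤ)*t) - (p:ℤ)*t := by ring
    rw [this]
    exact hd4.sub (Dvd.intro _ rfl)
  have := Int.le_of_dvd one_pos hd5
  have := hp.two_le
  omega

end Aux

theorem levelSet_image_mod_p (p : ℕ) (hp : p.Prime) (hodd : Odd p)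
    (r : ℕ) (hr : 2 ≤ r) (l : ℕ) (hl : l < p ^ (r - 1)) :
    (levelSet p (r - 1) l).image (fun u => u % p) = Finset.Ico 1 p := by
  set s := r - 1 with hs_def
  have hs : 1 ≤ s := by omega
  have hps : 0 < p^s := pow_pos hp.pos s
  ext x
  simp only [Finset.mem_image, Finset.mem_Ico, levelSet, Finset.mem_filter, Finset.mem_range]
  constructor
  · rintro ⟨u, ⟨hur, huc, huq⟩, rfl⟩
    refine ⟨?_, Nat.mod_lt u hp.pos⟩
    by_contra h
    push_neg at h
    have h0 : u % p = 0 := by omega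
    have := hp.coprime_iff_not_dvd.mp huc.symm
    exact this (Nat.dvd_of_mod_eq_zero h0)
  · rintro ⟨hx1, hxp⟩
    have hxcop : x.Coprime p := by
      refine (hp.coprime_iff_not_dvd.mpr (fun hdvd => ?_)).symm
      have := Nat.le_of_dvd (by omega) hdvd
      omega
    have h1p : Nat.Coprime (1 + p) p := coprime_one_add hp
    set q := eulerQuotient p s (1 + p) with hq_def
    have hqnd : ¬ p ∣ q := q_not_dvd hp hodd hs
    have hq_cop : q.Coprime (p^s) := ((hp.coprime_iff_not_dvd.mpr hqnd).symm).pow_right s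
    haveI : NeZero (p^s) := ⟨hps.ne'⟩
    have hunit : IsUnit ((q : ℕ) : ZMod (p^s)) := (ZMod.isUnit_iff_coprime q (p^s)).mpr hq_cop
    set k := ((l : ZMod (p^s)) * ((q : ℕ) : ZMod (p^s))⁻¹).val with hk_def
    have hk : (k * q) % p^s = l := by
      have h1 : ((k*q : ℕ) : ZMod (p^s)) = (l : ZMod (p^s)) := by
        push_cast
        rw [hk_def, ZMod.natCast_val, ZMod.cast_id, mul_assoc,
          ZMod.inv_mul_of_unit _ hunit, mul_one]
      have h2 : (k*q) % p^s = l % p^s := (ZMod.natCast_eq_natCast_iff _ _ _).mp h1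
      rwa [Nat.mod_eq_of_lt hl] at h2
    set u0 := x^(p^s) * (1+p)^k with hu0_def
    have hu0cop : u0.Coprime p := (hxcop.pow_left _).mul (h1p.pow_left _)
    have hQu0 : eulerQuotient p s u0 = l := by
      rw [hu0_def, euler_mul hp hs (hxcop.pow_left _) (h1p.pow_left _),
        euler_pow hp hs hxcop, euler_pow hp hs h1p, ← hq_def, Nat.mul_mod_right]
      rw [Nat.zero_add, Nat.mod_mod_of_dvd _ dvd_rfl, hk]
    have hpdvd : p ∣ p^(s+1) := dvd_pow_self p (by omega)
    refine ⟨u0 % p^(s+1), ⟨Nat.mod_lt _ (pow_pos hp.pos (s+1)), ?_, ?_⟩, ?_⟩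
    · -- coprime
      have : ¬ p ∣ u0 % p^(s+1) := by
        rw [Nat.dvd_mod_iff hpdvd]
        exact hp.coprime_iff_not_dvd.mp hu0cop.symm
      exact (hp.coprime_iff_not_dvd.mpr this).symm
    · rw [euler_mod hp hs hu0cop]
      exact hQu0
    · -- residue
      show (u0 % p^(s+1)) % p = x
      rw [Nat.mod_mod_of_dvd _ hpdvd]
      haveI : Fact p.Prime := ⟨hp⟩
      have hcast : ((u0 : ℕ) : ZMod p) = (x : ZMod p) := by
        rw [hu0_def]
        push_cast
        rw [ZMod.natCast_self, add_zero, one_pow, mul_one, ZMod.pow_card_pow]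
      have := (ZMod.natCast_eq_natCast_iff _ _ _).mp hcast
      have h2 : u0 % p = x % p := this
      rwa [Nat.mod_eq_of_lt hxp] at h2
end

section
/- Let p be an odd prime and r ≥ 3. In F_2[X], for any 0 ≤ ℓ < p^{r−1}, the polynomial 1 + X^{p^{r−1}} + X^{2p^{r−1}} + ... + X^{(p−1)p^{r−1}} divides the sum over i = 0,...,p−1 of the polynomials d_{ℓ + i·p^{r−2} mod p^{r−1}}(X), where d_m(X) = Σ_{n ∈ D_m^{(p^r)}} X^n. -/
open Polynomial

/-- The level set `D_m^{(p^r)} = {u : 0 ≤ u < p^r, gcd(u,p)=1, Q_{r-1}(u)=m}`. -/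
def levelSetD (p r m : ℕ) : Finset ℕ :=
  (Finset.range (p ^ r)).filter (fun u => Nat.Coprime u p ∧ eulerQuotient p (r - 1) u = m)

/-- `d_m(X) = Σ_{n ∈ D_m^{(p^r)}} X^n ∈ F_2[X]`. -/
noncomputable def dPoly (p r m : ℕ) : Polynomial (ZMod 2) :=
  ∑ n ∈ levelSetD p r m, X ^ n

private lemma step_pow {p : ℕ} (hp : p.Prime) {a b : ℤ} {k : ℕ} (hk : 1 ≤ k)
    (h : a ≡ b [ZMOD (p : ℤ) ^ k]) : a ^ p ≡ b ^ p [ZMOD (p : ℤ) ^ (k + 1)] := by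
  have h1 : a ≡ b [ZMOD (p : ℤ)] := h.of_dvd (dvd_pow_self _ (by omega))
  have hg0 : ((∑ i ∈ Finset.range p, a ^ i * b ^ (p - 1 - i) : ℤ) : ZMod p) = 0 := by
    push_cast
    have hab : ((a : ZMod p)) = (b : ZMod p) := (ZMod.intCast_eq_intCast_iff _ _ _).2 h1
    rw [hab]
    have hterm : ∀ i ∈ Finset.range p,
        (b : ZMod p) ^ i * (b : ZMod p) ^ (p - 1 - i) = (b : ZMod p) ^ (p - 1) := by
      intro i hi
      rw [← pow_add]
      congr 1
      have := Finset.mem_range.1 hi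
      omega
    rw [Finset.sum_congr rfl hterm, Finset.sum_const, Finset.card_range, nsmul_eq_mul,
      ZMod.natCast_self, zero_mul]
  have hgd : (p : ℤ) ∣ ∑ i ∈ Finset.range p, a ^ i * b ^ (p - 1 - i) :=
    (ZMod.intCast_zmod_eq_zero_iff_dvd _ _).1 hg0
  have hab : (p : ℤ) ^ k ∣ a - b := h.symm.dvd
  have key : (p : ℤ) ^ (k + 1) ∣ a ^ p - b ^ p := by
    rw [← geom_sum₂_mul, pow_succ']
    exact mul_dvd_mul hgd hab
  have : b ^ p ≡ a ^ p [ZMOD (p : ℤ) ^ (k + 1)] := Int.modEq_iff_dvd.2 key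
  exact this.symm

private lemma pow_pow_modEq_int {p : ℕ} (hp : p.Prime) {a b : ℤ} {k : ℕ} (hk : 1 ≤ k)
    (h : a ≡ b [ZMOD (p : ℤ) ^ k]) (t : ℕ) :
    a ^ p ^ t ≡ b ^ p ^ t [ZMOD (p : ℤ) ^ (k + t)] := by
  induction t with
  | zero => simpa using h
  | succ t ih =>
      have hstep := step_pow hp (k := k + t) (by omega) ih
      rw [← pow_mul, ← pow_mul, ← pow_succ] at hstep
      rw [show k + (t + 1) = k + t + 1 by omega]
      exact hstep

private lemma eulerQuotient_mod_eq (p : ℕ) (hp : p.Prime) (s : ℕ) (hs : 2 ≤ s)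
    {u v : ℕ} (hu : Nat.Coprime u p) (hv : Nat.Coprime v p) (huv : u ≡ v [MOD p ^ s]) :
    eulerQuotient p s u % p ^ (s - 1) = eulerQuotient p s v % p ^ (s - 1) := by
  set φ := p ^ (s - 1) * (p - 1) with hφ
  have hu0 : 0 < u := by
    rcases Nat.eq_zero_or_pos u with h | h
    · subst h
      exact absurd (Nat.coprime_zero_left p |>.1 hu) hp.ne_one
    · exact h
  have hv0 : 0 < v := by
    rcases Nat.eq_zero_or_pos v with h | h
    · subst h
      exact absurd (Nat.coprime_zero_left p |>.1 hv) hp.ne_one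
    · exact h
  have hdu : p ^ s ∣ u ^ φ - 1 := by
    have h1 := Nat.ModEq.pow_totient (hu.pow_right s)
    rw [Nat.totient_prime_pow hp (show 0 < s by omega)] at h1
    exact (Nat.modEq_iff_dvd' (pow_pos hu0 _)).1 h1.symm
  have hdv : p ^ s ∣ v ^ φ - 1 := by
    have h1 := Nat.ModEq.pow_totient (hv.pow_right s)
    rw [Nat.totient_prime_pow hp (show 0 < s by omega)] at h1
    exact (Nat.modEq_iff_dvd' (pow_pos hv0 _)).1 h1.symm
  have hz : (u : ℤ) ≡ (v : ℤ) [ZMOD (p : ℤ) ^ s] := by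
    have := Int.natCast_modEq_iff.2 huv
    push_cast at this
    exact this
  have hzpow := (pow_pow_modEq_int hp (show 1 ≤ s by omega) hz (s - 1)).pow (p - 1)
  rw [← pow_mul, ← pow_mul] at hzpow
  have h4 : ((u ^ φ : ℕ) : ℤ) ≡ ((v ^ φ : ℕ) : ℤ) [ZMOD ((p ^ (s + (s - 1)) : ℕ) : ℤ)] := by
    push_cast
    exact hzpow
  have hpow : u ^ φ ≡ v ^ φ [MOD p ^ (s + (s - 1))] := Int.natCast_modEq_iff.1 h4
  have hsub : u ^ φ - 1 ≡ v ^ φ - 1 [MOD p ^ (s + (s - 1))] := by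
    apply Nat.ModEq.add_right_cancel' 1
    rwa [Nat.sub_add_cancel (pow_pos hu0 _), Nat.sub_add_cancel (pow_pos hv0 _)]
  have hdiv : (u ^ φ - 1) / p ^ s ≡ (v ^ φ - 1) / p ^ s [MOD p ^ (s - 1)] := by
    apply Nat.ModEq.mul_left_cancel' (c := p ^ s) (pow_ne_zero _ hp.pos.ne')
    rw [Nat.mul_div_cancel' hdu, Nat.mul_div_cancel' hdv, ← pow_add]
    exact hsub
  show (((u ^ φ - 1) / p ^ s) % p ^ s) % p ^ (s - 1)
      = (((v ^ φ - 1) / p ^ s) % p ^ s) % p ^ (s - 1)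
  rw [Nat.mod_mod_of_dvd _ (pow_dvd_pow p (by omega : s - 1 ≤ s)),
    Nat.mod_mod_of_dvd _ (pow_dvd_pow p (by omega : s - 1 ≤ s))]
  exact hdiv

private lemma exists_shift_mod {p c q l : ℕ} (hp : 0 < p) (hc : 0 < c)
    (hq : q < c * p) (hl : l < c * p) (h : q % c = l % c) :
    ∃ i < p, q = (l + i * c) % (c * p) := by
  set a := l / c with hadef
  set b := q / c with hbdef
  have ha : a < p := (Nat.div_lt_iff_lt_mul hc).2 (by rwa [mul_comm] at hl)
  have hb : b < p := (Nat.div_lt_iff_lt_mul hc).2 (by rwa [mul_comm] at hq)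
  refine ⟨(b + p - a) % p, Nat.mod_lt _ hp, ?_⟩
  set i := (b + p - a) % p with hidef
  have hmod : a + i ≡ b [MOD p] := by
    calc a + i ≡ a + (b + p - a) [MOD p] := Nat.ModEq.add_left a (Nat.mod_modEq _ p)
      _ = b + p := Nat.add_sub_cancel' (ha.le.trans (Nat.le_add_left p b))
      _ ≡ b [MOD p] := by
          show (b + p) % p = b % p
          exact Nat.add_mod_right b p
  have hmul : (a + i) * c ≡ b * c [MOD p * c] := hmod.mul_right' c
  have hl' : l = l % c + a * c := by
    rw [mul_comm]
    exact (Nat.mod_add_div l c).symm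
  have hq' : q = q % c + b * c := by
    rw [mul_comm]
    exact (Nat.mod_add_div q c).symm
  have e1 : l + i * c = l % c + (a + i) * c := by
    rw [add_mul, ← add_assoc, ← hl']
  have e2 : l % c + b * c = q := by
    rw [← h]
    exact hq'.symm
  have key : l + i * c ≡ q [MOD c * p] := by
    have h2 : l % c + (a + i) * c ≡ l % c + b * c [MOD c * p] := by
      rw [mul_comm c p]
      exact hmul.add_left _
    calc l + i * c = l % c + (a + i) * c := e1
      _ ≡ l % c + b * c [MOD c * p] := h2
      _ = q := e2
  have : (l + i * c) % (c * p) = q % (c * p) := key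
  rw [this, Nat.mod_eq_of_lt hq]

theorem cyclotomic_dvd_sum_dPoly (p : ℕ) (hp : p.Prime) (hodd : Odd p)
    (r : ℕ) (hr : 3 ≤ r) (ℓ : ℕ) (hℓ : ℓ < p ^ (r - 1)) :
    (∑ i ∈ Finset.range p, (X : Polynomial (ZMod 2)) ^ (i * p ^ (r - 1))) ∣
      ∑ i ∈ Finset.range p, dPoly p r ((ℓ + i * p ^ (r - 2)) % p ^ (r - 1)) := by
  classical
  have hp1 : 1 < p := hp.one_lt
  set c := p ^ (r - 2) with hc
  set P := p ^ (r - 1) with hP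
  have hcP : P = c * p := by
    rw [hP, hc, ← pow_succ]
    congr 1
    omega
  have hpr : p ^ r = P * p := by
    rw [hP, ← pow_succ]
    congr 1
    omega
  have hc0 : 0 < c := pow_pos hp.pos _
  have hP0 : 0 < P := pow_pos hp.pos _
  have hpP : p ∣ P := hcP ▸ dvd_mul_left p c
  have hr2 : r - 1 - 1 = r - 2 := by omega
  -- coprimality transfer
  have hdvd_iff : ∀ u : ℕ, Nat.Coprime u p ↔ ¬ p ∣ u := fun u => by
    rw [Nat.coprime_comm]
    exact hp.coprime_iff_not_dvd
  have hcop_iff : ∀ u : ℕ, (Nat.Coprime (u % P) p ↔ Nat.Coprime u p) := fun u => by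
    rw [hdvd_iff, hdvd_iff, Nat.dvd_mod_iff hpP]
  -- Euler quotient congruence transfer
  have hQ : ∀ u : ℕ, Nat.Coprime u p →
      eulerQuotient p (r - 1) u % c = eulerQuotient p (r - 1) (u % P) % c := by
    intro u hu
    have := eulerQuotient_mod_eq p hp (r - 1) (by omega) hu ((hcop_iff u).2 hu)
      ((Nat.mod_modEq u P).symm)
    rwa [hr2] at this
  -- the euler quotient is < P
  have hQlt : ∀ u : ℕ, eulerQuotient p (r - 1) u < P := fun u => Nat.mod_lt _ hP0
  -- distinctness of the residues
  have hm_inj : ∀ i < p, ∀ j < p, (ℓ + i * c) % P = (ℓ + j * c) % P → i = j := by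
    intro i hi j hj hij
    rw [hcP] at hij
    have h1 : ℓ + i * c ≡ ℓ + j * c [MOD c * p] := hij
    have h2 : i * c ≡ j * c [MOD c * p] := Nat.ModEq.add_left_cancel' ℓ h1
    rw [mul_comm c p] at h2
    have h3 : i ≡ j [MOD p] := Nat.ModEq.mul_right_cancel' hc0.ne' h2
    have h4 : i % p = j % p := h3
    rwa [Nat.mod_eq_of_lt hi, Nat.mod_eq_of_lt hj] at h4
  set T := (Finset.range (p ^ r)).filter
    (fun u => Nat.Coprime u p ∧ eulerQuotient p (r - 1) u % c = ℓ % c) with hT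
  set V := (Finset.range P).filter
    (fun v => Nat.Coprime v p ∧ eulerQuotient p (r - 1) v % c = ℓ % c) with hV
  have hdisj : (↑(Finset.range p) : Set ℕ).PairwiseDisjoint
      (fun i => levelSetD p r ((ℓ + i * c) % P)) := by
    intro i hi j hj hij
    simp only [Finset.coe_range, Set.mem_Iio] at hi hj
    refine Finset.disjoint_left.2 fun u hui huj => hij ?_
    simp only [levelSetD, Finset.mem_filter] at hui huj
    exact hm_inj i hi j hj (hui.2.2.symm.trans huj.2.2)
  -- step A : the sum equals the sum over T
  have hA : ∑ i ∈ Finset.range p, dPoly p r ((ℓ + i * c) % P)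
      = ∑ u ∈ T, (X : Polynomial (ZMod 2)) ^ u := by
    simp only [dPoly]
    rw [← Finset.sum_biUnion hdisj]
    congr 1
    ext u
    simp only [Finset.mem_biUnion, Finset.mem_range, levelSetD, Finset.mem_filter, hT]
    constructor
    · rintro ⟨i, hi, hu, hcop, hQu⟩
      refine ⟨hu, hcop, ?_⟩
      rw [hQu, hcP, Nat.mod_mod_of_dvd _ (dvd_mul_right c p), Nat.add_mul_mod_self_right]
    · rintro ⟨hu, hcop, hQu⟩
      have hqlt : eulerQuotient p (r - 1) u < c * p := by
        rw [← hcP]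
        exact hQlt u
      obtain ⟨i, hip, hieq⟩ := exists_shift_mod hp.pos hc0 hqlt (hcP ▸ hℓ) hQu
      exact ⟨i, hip, hu, hcop, by rw [hcP]; exact hieq⟩
  -- step B : T is the image of the product
  have hinj : ∀ x ∈ Finset.range p ×ˢ V, ∀ y ∈ Finset.range p ×ˢ V,
      x.1 * P + x.2 = y.1 * P + y.2 → x = y := by
    rintro ⟨i, v⟩ hx ⟨j, w⟩ hy hxy
    simp only [Finset.mem_product, Finset.mem_range, hV, Finset.mem_filter] at hx hy
    have hv : v < P := hx.2.1
    have hw : w < P := hy.2.1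
    have h1 : v = w := by
      have := congrArg (· % P) hxy
      simpa [Nat.mul_add_mod', Nat.mod_eq_of_lt hv, Nat.mod_eq_of_lt hw] using this
    have h2 : i * P = j * P := by
      rw [h1] at hxy
      exact Nat.add_right_cancel hxy
    have h3 : i = j := Nat.eq_of_mul_eq_mul_right hP0 h2
    rw [h1, h3]
  have hTim : T = (Finset.range p ×ˢ V).image (fun x => x.1 * P + x.2) := by
    ext u
    simp only [hT, Finset.mem_filter, Finset.mem_range, Finset.mem_image,
      Finset.mem_product, hV, Prod.exists]
    constructor
    · rintro ⟨hu, hcop, hQu⟩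
      refine ⟨u / P, u % P, ⟨?_, ?_, ?_, ?_⟩, ?_⟩
      · exact (Nat.div_lt_iff_lt_mul hP0).2 (by rw [mul_comm, ← hpr]; exact hu)
      · exact Nat.mod_lt _ hP0
      · exact (hcop_iff u).2 hcop
      · rw [← hQ u hcop]
        exact hQu
      · exact Nat.div_add_mod' u P
    · rintro ⟨i, v, ⟨hi, hv, hcv, hQv⟩, rfl⟩
      have hvP : (i * P + v) % P = v := Nat.mul_add_mod_of_lt hv
      have hcop : Nat.Coprime (i * P + v) p := by
        rw [← hcop_iff, hvP]
        exact hcv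
      refine ⟨?_, hcop, ?_⟩
      · calc i * P + v < i * P + P := by omega
          _ = (i + 1) * P := by ring
          _ ≤ p * P := Nat.mul_le_mul_right _ (by omega)
          _ = p ^ r := by rw [hpr, mul_comm]
      · rw [hQ _ hcop, hvP]
        exact hQv
  have hB : ∑ u ∈ T, (X : Polynomial (ZMod 2)) ^ u
      = (∑ i ∈ Finset.range p, (X : Polynomial (ZMod 2)) ^ (i * P)) * (∑ v ∈ V, X ^ v) := by
    rw [hTim, Finset.sum_image hinj, Finset.sum_product, Finset.sum_mul_sum]
    exact Finset.sum_congr rfl fun i _ => Finset.sum_congr rfl fun v _ => pow_add X _ _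
  exact ⟨∑ v ∈ V, X ^ v, hA.trans hB⟩
end
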